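/- Let n ≥ 4 and 2 ≤ a ≤ n−1 be integers, and let v ∈ ℂⁿ be a nonzero point satisfying a·v_j^{a−1} = ∏_{k≠j} v_k for every j. Then the n×n complex matrix H defined by H_{jj} = a(a−1)·v_j^{a−2} and, for i ≠ j, H_{ij} = −∏_{k∉{i,j}} v_k, has nonzero determinant. -/

import Mathlib

/-!
At a critical point `v` with `v ≠ 0` every coordinate is nonzero, and `∏ₖ vₖ = a vⱼ^a` for every
`j`. Hence, with `P = ∏ₖ vₖ` and `D = diag(v⁻¹)`, the Hessian factors as `H = D (P • (a I - J)) D`,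
where `J` is the all-ones matrix. The rank-one matrix `J` has eigenvalues `n` and `0`, so
`det (a I - J) = a^(n-1) (a - n)`, which vanishes only if `a = n`.
-/

open Matrix Finset

theorem Matrix.det_smul_one_sub_of_one {ι K : Type*} [Fintype ι] [DecidableEq ι] [Field K]
    {c : K} (hc : c ≠ 0) :
    det (c • 1 - of 1 : Matrix ι ι K) = c ^ Fintype.card ι * (1 - Fintype.card ι / c) := by
  have hrank_one : c • 1 - of 1 = c •
      (1 + replicateCol Unit (fun _ : ι => -c⁻¹) * replicateRow Unit (fun _ : ι => (1 : K))) := by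
    ext i j
    simp only [Matrix.sub_apply, Matrix.smul_apply, add_apply, one_apply, of_apply, Pi.one_apply,
      smul_eq_mul, mul_apply, replicateCol_apply, replicateRow_apply, univ_unique, sum_singleton]
    split_ifs <;> field_simp <;> ring
  rw [hrank_one, det_smul, det_one_add_replicateCol_mul_replicateRow]
  simp [dotProduct, div_eq_mul_inv, sub_eq_add_neg]

section CriticalPoint

variable {ι K : Type*} [Fintype ι] [DecidableEq ι] [Field K] {a : ℕ} {v : ι → K}

/-- `v` is a critical point of `Z_a(u) = -∏ₖ uₖ + ∑ⱼ uⱼ^a`. -/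
def IsCriticalZ (a : ℕ) (v : ι → K) : Prop :=
  ∀ j, (a : K) * v j ^ (a - 1) = ∏ k ∈ univ.erase j, v k

/-- The Hessian matrix of `Z_a` at `v`. -/
def hessianZ (a : ℕ) (v : ι → K) : Matrix ι ι K :=
  of fun i j => if i = j then (a : K) * ((a : K) - 1) * v j ^ (a - 2)
    else -∏ k ∈ univ \ {i, j}, v k

theorem IsCriticalZ.ne_zero (hcrit : IsCriticalZ a v) (ha : 2 ≤ a) (ha0 : (a : K) ≠ 0)
    (hv : v ≠ 0) (j : ι) : v j ≠ 0 := by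
  intro hj
  refine hv (funext fun i => ?_)
  rcases eq_or_ne i j with rfl | hij
  · exact hj
  · have hprod : ∏ k ∈ univ.erase i, v k = 0 := prod_eq_zero (mem_erase.2 ⟨hij.symm, mem_univ j⟩) hj
    rw [← hcrit i, mul_eq_zero] at hprod
    exact (pow_eq_zero_iff (by omega)).1 (hprod.resolve_left ha0)

theorem IsCriticalZ.prod_eq (hcrit : IsCriticalZ a v) (ha : 1 ≤ a) (j : ι) :
    ∏ k, v k = a * v j ^ a := by
  rw [← mul_prod_erase univ v (mem_univ j), ← hcrit j]
  obtain ⟨b, rfl⟩ := Nat.exists_eq_add_of_le' ha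
  simp only [Nat.add_sub_cancel]
  ring

theorem IsCriticalZ.hessianZ_eq (hcrit : IsCriticalZ a v) (ha : 2 ≤ a) (hv : ∀ j, v j ≠ 0) :
    hessianZ a v = diagonal v⁻¹ * ((∏ k, v k) • ((a : K) • 1 - of 1)) * diagonal v⁻¹ := by
  ext i j
  rw [mul_diagonal, diagonal_mul]
  rcases eq_or_ne i j with rfl | hij
  · obtain ⟨b, rfl⟩ := Nat.exists_eq_add_of_le' ha
    simp only [hessianZ, of_apply, if_true, Nat.add_sub_cancel, hcrit.prod_eq (by omega) i,
      Pi.inv_apply, Matrix.smul_apply, Matrix.sub_apply, one_apply_eq, smul_eq_mul, mul_one,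
      Pi.one_apply, Nat.cast_add, Nat.cast_ofNat]
    field_simp [hv i]
    ring
  · have hsplit : (∏ k ∈ univ \ {i, j}, v k) * (v i * v j) = ∏ k, v k := by
      rw [← prod_pair hij, prod_sdiff (subset_univ _)]
    simp only [hessianZ, of_apply, if_neg hij, ← hsplit, Pi.inv_apply, Matrix.smul_apply,
      Matrix.sub_apply, one_apply_ne hij, smul_eq_mul, mul_zero, Pi.one_apply, zero_sub, mul_neg,
      mul_one]
    field_simp [hv i, hv j]

end CriticalPoint

theorem hessian_nondegenerate_at_small_critical_points_general
    (n a : ℕ) (ha : 2 ≤ a) (han : a ≤ n - 1)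
    (v : Fin n → ℂ) (hv0 : v ≠ 0)
    (hcrit : ∀ j, (a : ℂ) * v j ^ (a - 1) = ∏ k ∈ Finset.univ.erase j, v k) :
    (Matrix.of fun i j : Fin n =>
        if i = j then (a : ℂ) * ((a : ℂ) - 1) * v j ^ (a - 2)
        else -∏ k ∈ Finset.univ \ {i, j}, v k).det ≠ 0 := by
  have hcrit : IsCriticalZ a v := hcrit
  have ha0 : (a : ℂ) ≠ 0 := by exact_mod_cast (by omega : a ≠ 0)
  have hna : (n : ℂ) ≠ a := by exact_mod_cast (by omega : n ≠ a)
  have hv := hcrit.ne_zero ha ha0 hv0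
  change (hessianZ a v).det ≠ 0
  rw [hcrit.hessianZ_eq ha hv, det_mul, det_mul, det_smul, det_smul_one_sub_of_one ha0,
    det_diagonal]
  have hD : ∏ i, v⁻¹ i ≠ 0 := prod_ne_zero_iff.2 fun i _ => inv_ne_zero (hv i)
  have hP : ∏ k, v k ≠ 0 := prod_ne_zero_iff.2 fun k _ => hv k
  have hdet : 1 - (Fintype.card (Fin n) : ℂ) / a ≠ 0 := by
    rwa [Fintype.card_fin, sub_ne_zero, ne_comm, Ne, div_eq_one_iff_eq ha0]
  exact mul_ne_zero (mul_ne_zero hD (mul_ne_zero (pow_ne_zero _ hP)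
    (mul_ne_zero (pow_ne_zero _ ha0) hdet))) hD

/-- For `n ≥ 4`, `2 ≤ a ≤ n−1`, if `v ∈ ℂⁿ` is a nonzero critical point of
`Z^n_a`, then the Hessian matrix `H` with `H_{jj} = a(a−1)·v_j^{a−2}` and
`H_{ij} = −∏_{k∉{i,j}} v_k` for `i ≠ j` has nonzero determinant. -/
theorem hessian_nondegenerate_at_small_critical_points
    (n a : ℕ) (hn : 4 ≤ n) (ha : 2 ≤ a) (han : a ≤ n - 1)
    (v : Fin n → ℂ) (hv0 : v ≠ 0)
    (hcrit : ∀ j, (a : ℂ) * v j ^ (a - 1) = ∏ k ∈ Finset.univ.erase j, v k) :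
    (Matrix.of fun i j : Fin n =>
        if i = j then (a : ℂ) * ((a : ℂ) - 1) * v j ^ (a - 2)
        else -∏ k ∈ Finset.univ \ {i, j}, v k).det ≠ 0 :=
  hessian_nondegenerate_at_small_critical_points_general n a ha han v hv0 hcrit
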